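/- arXiv:2011.04745 — 3 statements merged into one kernel-verified Lean document; each statement's English description precedes it below -/
import Mathlib

section
/- (Equivalence of implicit and Minkowski-sum descriptions.) Let E ⊆ F, let P ⊆ ℝ₊^F be any set (the achievable reconstructed-rate region), and let C↑^F be the cone generated by {e_{S→S'} : S∈E, S'∈F, S⊊S'}. Then a nonnegative vector (R_S : S∈E), embedded in ℝ^F by zero-padding, lies in (P + C↑^F) ∩ {R ∈ ℝ₊^F : R_S = 0 for S∈F\E} if and only if there exist nonnegative split-rates (r_{S→S'} : S∈E, S'∈F, S⊆S') with R_S = Σ_{S⊆S'} r_{S→S'} for all S∈E such that the reconstructed rates Ř_{S'} = Σ_{S∈E, S⊆S'} r_{S→S'} lie in P. -/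
open Finset

/-- The generating vector `e_{S→S'} ∈ ℝ^F` (coordinates indexed by `↥F`):
`+1` at coordinate `S`, `−1` at coordinate `S'`, `0` elsewhere. -/
def eVecF {K : ℕ} (F : Finset (Finset (Fin K))) (S S' : Finset (Fin K)) :
    ↥F → ℝ :=
  fun A => if A.1 = S then 1 else if A.1 = S' then -1 else 0

noncomputable section MinkAux

variable {K : ℕ}

/-- `c` restricted to edges `B → A` with `B ∈ E`, `B ⊂ A`. -/
def cEdge (E : Finset (Finset (Fin K))) (c : Finset (Fin K) → Finset (Fin K) → ℝ)
    (B A : Finset (Fin K)) : ℝ :=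
  if B ∈ E ∧ B ⊂ A then c B A else 0

/-- Total inflow at node `A`. -/
def Tin (E F : Finset (Finset (Fin K))) (c : Finset (Fin K) → Finset (Fin K) → ℝ)
    (pF : Finset (Fin K) → ℝ) (A : Finset (Fin K)) : ℝ :=
  pF A + ∑ A' ∈ F.filter (fun A' => A ⊂ A'), cEdge E c A A'

/-- Flow at node `A` originating from source `S`. -/
def fFlow (E F : Finset (Finset (Fin K))) (c : Finset (Fin K) → Finset (Fin K) → ℝ)
    (RF pF : Finset (Fin K) → ℝ) (S : Finset (Fin K)) (A : Finset (Fin K)) : ℝ :=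
  (if S = A then RF A else 0) +
  ∑ B ∈ (F.filter (fun B => S ⊆ B ∧ B ⊂ A)).attach,
    cEdge E c B.1 A * (fFlow E F c RF pF S B.1 / Tin E F c pF B.1)
termination_by A.card
decreasing_by
  have hB := B.2
  simp only [Finset.mem_filter] at hB
  exact Finset.card_lt_card hB.2.2

lemma fFlow_eq (E F : Finset (Finset (Fin K))) (c : Finset (Fin K) → Finset (Fin K) → ℝ)
    (RF pF : Finset (Fin K) → ℝ) (S A : Finset (Fin K)) :
    fFlow E F c RF pF S A =
      (if S = A then RF A else 0) +
      ∑ B ∈ F.filter (fun B => S ⊆ B ∧ B ⊂ A),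
        cEdge E c B A * (fFlow E F c RF pF S B / Tin E F c pF B) := by
  rw [fFlow]
  exact congrArg _ (Finset.sum_attach _ (fun B => cEdge E c B A * (fFlow E F c RF pF S B / Tin E F c pF B)))


lemma cEdge_nonneg (E : Finset (Finset (Fin K))) {c : Finset (Fin K) → Finset (Fin K) → ℝ}
    (hc : ∀ S S', 0 ≤ c S S') (B A : Finset (Fin K)) : 0 ≤ cEdge E c B A := by
  unfold cEdge; split
  · exact hc B A
  · exact le_refl 0

lemma Tin_nonneg (E F : Finset (Finset (Fin K))) {c : Finset (Fin K) → Finset (Fin K) → ℝ}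
    {pF : Finset (Fin K) → ℝ} (hc : ∀ S S', 0 ≤ c S S') (hp : ∀ A, 0 ≤ pF A)
    (A : Finset (Fin K)) : 0 ≤ Tin E F c pF A :=
  add_nonneg (hp A) (Finset.sum_nonneg fun B _ => cEdge_nonneg E hc A B)

lemma fFlow_nonneg (E F : Finset (Finset (Fin K))) {c : Finset (Fin K) → Finset (Fin K) → ℝ}
    {RF pF : Finset (Fin K) → ℝ} (hc : ∀ S S', 0 ≤ c S S') (hRF : ∀ A, 0 ≤ RF A)
    (hp : ∀ A, 0 ≤ pF A) (S A : Finset (Fin K)) : 0 ≤ fFlow E F c RF pF S A := by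
  rw [fFlow_eq]
  refine add_nonneg (by split <;> [exact hRF A; exact le_refl 0]) (Finset.sum_nonneg fun B hB => ?_)
  have hBA : B ⊂ A := (Finset.mem_filter.mp hB).2.2
  exact mul_nonneg (cEdge_nonneg E hc B A)
    (div_nonneg (fFlow_nonneg E F hc hRF hp S B) (Tin_nonneg E F hc hp B))
termination_by A.card
decreasing_by exact Finset.card_lt_card hBA

lemma fFlow_of_not_subset (E F : Finset (Finset (Fin K)))
    (c : Finset (Fin K) → Finset (Fin K) → ℝ) (RF pF : Finset (Fin K) → ℝ)
    {S A : Finset (Fin K)} (h : ¬ S ⊆ A) : fFlow E F c RF pF S A = 0 := by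
  rw [fFlow_eq, if_neg (by rintro rfl; exact h subset_rfl), Finset.sum_eq_zero, add_zero]
  intro B hB
  obtain ⟨-, hSB, hBA⟩ := Finset.mem_filter.mp hB
  exact absurd (hSB.trans hBA.subset) h

lemma flow_total (E F : Finset (Finset (Fin K))) {c : Finset (Fin K) → Finset (Fin K) → ℝ}
    {RF pF : Finset (Fin K) → ℝ} (hc : ∀ S S', 0 ≤ c S S') (hRF : ∀ A, 0 ≤ RF A)
    (hp : ∀ A, 0 ≤ pF A) (hR0 : ∀ A ∉ E, RF A = 0)
    (hcons : ∀ A ∈ F, RF A + ∑ B ∈ F.filter (fun B => B ⊂ A), cEdge E c B A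
        = Tin E F c pF A)
    (A : Finset (Fin K)) (hA : A ∈ F) :
    ∑ S ∈ E.filter (fun S => S ⊆ A), fFlow E F c RF pF S A = Tin E F c pF A := by
  have step1 : ∑ S ∈ E.filter (fun S => S ⊆ A), fFlow E F c RF pF S A =
      ∑ S ∈ E.filter (fun S => S ⊆ A), ((if S = A then RF A else 0) +
        ∑ B ∈ F.filter (fun B => B ⊂ A),
          cEdge E c B A * (fFlow E F c RF pF S B / Tin E F c pF B)) := by
    refine Finset.sum_congr rfl fun S hS => ?_
    rw [fFlow_eq]
    congr 1
    refine Finset.sum_subset (fun B hB => ?_) (fun B hB hB' => ?_)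
    · simp only [Finset.mem_filter] at hB ⊢; exact ⟨hB.1, hB.2.2⟩
    · simp only [Finset.mem_filter, not_and] at hB hB'
      have hnS : ¬ S ⊆ B := fun hSB => hB' hB.1 hSB hB.2
      rw [fFlow_of_not_subset E F c RF pF hnS, zero_div, mul_zero]
  rw [step1, Finset.sum_add_distrib]
  have hfirst : ∑ S ∈ E.filter (fun S => S ⊆ A), (if S = A then RF A else 0) = RF A := by
    rw [Finset.sum_ite_eq' (E.filter (fun S => S ⊆ A)) A (fun _ => RF A)]
    by_cases hAE : A ∈ E
    · simp [hAE]
    · simp [hAE, hR0 A hAE]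
  rw [hfirst, Finset.sum_comm]
  have hsecond : ∀ B ∈ F.filter (fun B => B ⊂ A),
      ∑ S ∈ E.filter (fun S => S ⊆ A),
        cEdge E c B A * (fFlow E F c RF pF S B / Tin E F c pF B) = cEdge E c B A := by
    intro B hB
    obtain ⟨hBF, hBA⟩ := Finset.mem_filter.mp hB
    have hshrink : ∑ S ∈ E.filter (fun S => S ⊆ A),
        cEdge E c B A * (fFlow E F c RF pF S B / Tin E F c pF B)
        = ∑ S ∈ E.filter (fun S => S ⊆ B),
          cEdge E c B A * (fFlow E F c RF pF S B / Tin E F c pF B) := by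
      symm
      refine Finset.sum_subset (fun S hS => ?_) (fun S hS hS' => ?_)
      · simp only [Finset.mem_filter] at hS ⊢; exact ⟨hS.1, hS.2.trans hBA.subset⟩
      · simp only [Finset.mem_filter, not_and] at hS hS'
        have hnS : ¬ S ⊆ B := fun hSB => hS' hS.1 hSB
        rw [fFlow_of_not_subset E F c RF pF hnS, zero_div, mul_zero]
    rw [hshrink, ← Finset.mul_sum, ← Finset.sum_div,
      flow_total E F hc hRF hp hR0 hcons B hBF]
    by_cases hT : Tin E F c pF B = 0
    · have hle : cEdge E c B A ≤ ∑ A' ∈ F.filter (fun A' => B ⊂ A'), cEdge E c B A' :=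
        Finset.single_le_sum (fun A' _ => cEdge_nonneg E hc B A')
          (Finset.mem_filter.mpr ⟨hA, hBA⟩)
      have hle2 : ∑ A' ∈ F.filter (fun A' => B ⊂ A'), cEdge E c B A' ≤ 0 := by
        have := hT; unfold Tin at this; nlinarith [hp B]
      have h0 : cEdge E c B A = 0 :=
        le_antisymm (hle.trans hle2) (cEdge_nonneg E hc B A)
      rw [h0, zero_mul]
    · rw [div_self hT, mul_one]
  rw [Finset.sum_congr rfl hsecond, ← hcons A hA]
termination_by A.card
decreasing_by exact Finset.card_lt_card hBA


lemma fFlow_zero_of_Tin (E F : Finset (Finset (Fin K)))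
    {c : Finset (Fin K) → Finset (Fin K) → ℝ} {RF pF : Finset (Fin K) → ℝ}
    (hc : ∀ S S', 0 ≤ c S S') (hRF : ∀ A, 0 ≤ RF A) (hp : ∀ A, 0 ≤ pF A)
    (hR0 : ∀ A ∉ E, RF A = 0)
    (hcons : ∀ A ∈ F, RF A + ∑ B ∈ F.filter (fun B => B ⊂ A), cEdge E c B A
        = Tin E F c pF A)
    {S A : Finset (Fin K)} (hS : S ∈ E) (hA : A ∈ F)
    (hT : Tin E F c pF A = 0) : fFlow E F c RF pF S A = 0 := by
  by_cases hSA : S ⊆ A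
  · have htot := flow_total E F hc hRF hp hR0 hcons A hA
    have hle : fFlow E F c RF pF S A ≤ ∑ S' ∈ E.filter (fun S' => S' ⊆ A),
        fFlow E F c RF pF S' A :=
      Finset.single_le_sum (fun S' _ => fFlow_nonneg E F hc hRF hp S' A)
        (Finset.mem_filter.mpr ⟨hS, hSA⟩)
    have := fFlow_nonneg E F hc hRF hp S A
    rw [htot, hT] at hle
    linarith
  · exact fFlow_of_not_subset E F c RF pF hSA

lemma flow_split (E F : Finset (Finset (Fin K)))
    {c : Finset (Fin K) → Finset (Fin K) → ℝ} {RF pF : Finset (Fin K) → ℝ}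
    (hc : ∀ S S', 0 ≤ c S S') (hRF : ∀ A, 0 ≤ RF A) (hp : ∀ A, 0 ≤ pF A)
    (hR0 : ∀ A ∉ E, RF A = 0)
    (hcons : ∀ A ∈ F, RF A + ∑ B ∈ F.filter (fun B => B ⊂ A), cEdge E c B A
        = Tin E F c pF A)
    {S A : Finset (Fin K)} (hS : S ∈ E) (hA : A ∈ F) :
    fFlow E F c RF pF S A =
      pF A * (fFlow E F c RF pF S A / Tin E F c pF A) +
      ∑ A' ∈ F.filter (fun A' => A ⊂ A'),
        cEdge E c A A' * (fFlow E F c RF pF S A / Tin E F c pF A) := by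
  rw [← Finset.sum_mul, ← add_mul]
  show _ = Tin E F c pF A * _
  by_cases hT : Tin E F c pF A = 0
  · rw [fFlow_zero_of_Tin E F hc hRF hp hR0 hcons hS hA hT, hT, zero_div, mul_zero]
  · rw [mul_div_cancel₀ _ hT]

lemma flow_rowsum (E F : Finset (Finset (Fin K)))
    {c : Finset (Fin K) → Finset (Fin K) → ℝ} {RF pF : Finset (Fin K) → ℝ}
    (hEF : E ⊆ F)
    (hc : ∀ S S', 0 ≤ c S S') (hRF : ∀ A, 0 ≤ RF A) (hp : ∀ A, 0 ≤ pF A)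
    (hR0 : ∀ A ∉ E, RF A = 0)
    (hcons : ∀ A ∈ F, RF A + ∑ B ∈ F.filter (fun B => B ⊂ A), cEdge E c B A
        = Tin E F c pF A)
    {S : Finset (Fin K)} (hS : S ∈ E) :
    ∑ A ∈ F.filter (fun A => S ⊆ A),
      pF A * (fFlow E F c RF pF S A / Tin E F c pF A) = RF S := by
  have h1 : ∑ A ∈ F.filter (fun A => S ⊆ A), fFlow E F c RF pF S A
      = ∑ A ∈ F.filter (fun A => S ⊆ A),
          pF A * (fFlow E F c RF pF S A / Tin E F c pF A)
        + ∑ A ∈ F.filter (fun A => S ⊆ A),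
            ∑ A' ∈ F.filter (fun A' => A ⊂ A'),
              cEdge E c A A' * (fFlow E F c RF pF S A / Tin E F c pF A) := by
    rw [← Finset.sum_add_distrib]
    refine Finset.sum_congr rfl fun A hA => ?_
    exact flow_split E F hc hRF hp hR0 hcons hS (Finset.mem_filter.mp hA).1
  have h2 : ∑ A ∈ F.filter (fun A => S ⊆ A), fFlow E F c RF pF S A
      = RF S
        + ∑ A ∈ F.filter (fun A => S ⊆ A),
            ∑ B ∈ F.filter (fun B => S ⊆ B ∧ B ⊂ A),
              cEdge E c B A * (fFlow E F c RF pF S B / Tin E F c pF B) := by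
    have : ∀ A ∈ F.filter (fun A => S ⊆ A), fFlow E F c RF pF S A =
        (if S = A then RF A else 0) +
        ∑ B ∈ F.filter (fun B => S ⊆ B ∧ B ⊂ A),
          cEdge E c B A * (fFlow E F c RF pF S B / Tin E F c pF B) :=
      fun A _ => fFlow_eq E F c RF pF S A
    rw [Finset.sum_congr rfl this, Finset.sum_add_distrib]
    congr 1
    rw [Finset.sum_ite_eq (F.filter (fun A => S ⊆ A)) S (fun A => RF A)]
    simp [Finset.mem_filter.mpr (show S ∈ F ∧ S ⊆ S from ⟨hEF hS, subset_rfl⟩)]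
  have h3 : ∑ A ∈ F.filter (fun A => S ⊆ A),
        ∑ B ∈ F.filter (fun B => S ⊆ B ∧ B ⊂ A),
          cEdge E c B A * (fFlow E F c RF pF S B / Tin E F c pF B)
      = ∑ B ∈ F.filter (fun B => S ⊆ B),
          ∑ A ∈ F.filter (fun A => B ⊂ A),
            cEdge E c B A * (fFlow E F c RF pF S B / Tin E F c pF B) := by
    refine Finset.sum_comm' fun A B => ?_
    simp only [Finset.mem_filter]
    constructor
    · rintro ⟨⟨hAF, hSA⟩, hBF, hSB, hBA⟩
      exact ⟨⟨hAF, hBA⟩, hBF, hSB⟩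
    · rintro ⟨⟨hAF, hBA⟩, hBF, hSB⟩
      exact ⟨⟨hAF, hSB.trans hBA.subset⟩, hBF, hSB, hBA⟩
  rw [h3] at h2
  rw [h2] at h1
  linarith


lemma sum_filter_subset_split (G : Finset (Finset (Fin K))) (A : Finset (Fin K))
    (g : Finset (Fin K) → ℝ) :
    ∑ S ∈ G.filter (fun S => S ⊆ A), g S
      = (if A ∈ G then g A else 0) + ∑ S ∈ G.filter (fun S => S ⊂ A), g S := by
  by_cases hA : A ∈ G
  · have hset : G.filter (fun S => S ⊆ A) = insert A (G.filter (fun S => S ⊂ A)) := by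
      ext S
      simp only [Finset.mem_filter, Finset.mem_insert]
      constructor
      · rintro ⟨hSG, hSA⟩
        rcases hSA.ssubset_or_eq with h | h
        · exact Or.inr ⟨hSG, h⟩
        · exact Or.inl h
      · rintro (rfl | ⟨hSG, hSA⟩)
        · exact ⟨hA, subset_rfl⟩
        · exact ⟨hSG, hSA.subset⟩
    rw [hset, Finset.sum_insert (by simp only [Finset.mem_filter]; rintro ⟨-, h⟩; exact h.ne rfl),
      if_pos hA]
  · rw [if_neg hA, zero_add]
    congr 1
    ext S
    simp only [Finset.mem_filter]
    constructor
    · rintro ⟨hSG, hSA⟩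
      refine ⟨hSG, lt_of_le_of_ne hSA ?_⟩
      rintro rfl; exact hA hSG
    · rintro ⟨hSG, hSA⟩
      exact ⟨hSG, hSA.subset⟩

lemma sum_filter_supset_split (G : Finset (Finset (Fin K))) (A : Finset (Fin K))
    (g : Finset (Fin K) → ℝ) :
    ∑ S ∈ G.filter (fun S => A ⊆ S), g S
      = (if A ∈ G then g A else 0) + ∑ S ∈ G.filter (fun S => A ⊂ S), g S := by
  by_cases hA : A ∈ G
  · have hset : G.filter (fun S => A ⊆ S) = insert A (G.filter (fun S => A ⊂ S)) := by
      ext S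
      simp only [Finset.mem_filter, Finset.mem_insert]
      constructor
      · rintro ⟨hSG, hSA⟩
        rcases eq_or_ne A S with h | h
        · exact Or.inl h.symm
        · exact Or.inr ⟨hSG, lt_of_le_of_ne hSA h⟩
      · rintro (rfl | ⟨hSG, hSA⟩)
        · exact ⟨hA, subset_rfl⟩
        · exact ⟨hSG, hSA.subset⟩
    rw [hset, Finset.sum_insert (by simp only [Finset.mem_filter]; rintro ⟨-, h⟩; exact h.ne rfl),
      if_pos hA]
  · rw [if_neg hA, zero_add]
    congr 1
    ext S
    simp only [Finset.mem_filter]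
    constructor
    · rintro ⟨hSG, hSA⟩
      refine ⟨hSG, lt_of_le_of_ne hSA ?_⟩
      rintro rfl; exact hA hSG
    · rintro ⟨hSG, hSA⟩
      exact ⟨hSG, hSA.subset⟩

lemma cone_eval (E F : Finset (Finset (Fin K))) (hEF : E ⊆ F)
    (c : Finset (Fin K) → Finset (Fin K) → ℝ) (A : ↥F) :
    ∑ S ∈ E, ∑ S' ∈ F.filter (fun S' => S ⊂ S'), c S S' * eVecF F S S' A
      = (∑ A' ∈ F.filter (fun A' => A.1 ⊂ A'), cEdge E c A.1 A')
        - ∑ B ∈ F.filter (fun B => B ⊂ A.1), cEdge E c B A.1 := by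
  have hterm : ∀ S S' : Finset (Fin K), c S S' * eVecF F S S' A
      = (if A.1 = S then c S S' else 0)
        + (if A.1 = S' ∧ A.1 ≠ S then -(c S S') else 0) := by
    intro S S'
    unfold eVecF
    by_cases h1 : A.1 = S
    · simp [h1]
    · by_cases h2 : A.1 = S'
      · have h3 : S' ≠ S := by rintro rfl; exact h1 h2
        simp [h1, h2, h3]
      · simp [h1, h2, eq_comm]
  calc ∑ S ∈ E, ∑ S' ∈ F.filter (fun S' => S ⊂ S'), c S S' * eVecF F S S' A
      = (∑ S ∈ E, ∑ S' ∈ F.filter (fun S' => S ⊂ S'),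
            (if A.1 = S then c S S' else 0))
        + ∑ S ∈ E, ∑ S' ∈ F.filter (fun S' => S ⊂ S'),
            (if A.1 = S' ∧ A.1 ≠ S then -(c S S') else 0) := by
        rw [← Finset.sum_add_distrib]
        refine Finset.sum_congr rfl fun S _ => ?_
        rw [← Finset.sum_add_distrib]
        exact Finset.sum_congr rfl fun S' _ => hterm S S'
    _ = (∑ A' ∈ F.filter (fun A' => A.1 ⊂ A'), cEdge E c A.1 A')
        - ∑ B ∈ F.filter (fun B => B ⊂ A.1), cEdge E c B A.1 := by
        congr 1
        · -- positive part
          have h1 : ∀ S ∈ E, ∑ S' ∈ F.filter (fun S' => S ⊂ S'),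
              (if A.1 = S then c S S' else 0)
              = if A.1 = S then ∑ S' ∈ F.filter (fun S' => S ⊂ S'), c S S' else 0 := by
            intro S _
            by_cases h : A.1 = S <;> simp [h]
          rw [Finset.sum_congr rfl h1,
            Finset.sum_ite_eq E A.1 (fun S => ∑ S' ∈ F.filter (fun S' => S ⊂ S'), c S S')]
          by_cases hAE : A.1 ∈ E
          · rw [if_pos hAE]
            refine Finset.sum_congr rfl fun S' hS' => ?_
            obtain ⟨hS'F, hAS'⟩ := Finset.mem_filter.mp hS'
            simp [cEdge, hAE, hAS']
          · rw [if_neg hAE]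
            symm
            refine Finset.sum_eq_zero fun S' _ => ?_
            simp [cEdge, hAE]
        · -- negative part
          have h1 : ∀ S ∈ E, ∑ S' ∈ F.filter (fun S' => S ⊂ S'),
              (if A.1 = S' ∧ A.1 ≠ S then -(c S S') else 0)
              = if S ⊂ A.1 then -(c S A.1) else 0 := by
            intro S _
            have hrw : ∀ S' ∈ F.filter (fun S' => S ⊂ S'),
                (if A.1 = S' ∧ A.1 ≠ S then -(c S S') else 0)
                = if S' = A.1 then (if A.1 ≠ S then -(c S S') else 0) else 0 := by
              intro S' _
              by_cases h1 : A.1 = S' <;> by_cases h2 : A.1 = S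
              · simp [h1, h2]
              · simp [h1, h2]
              · have h1' : S' ≠ A.1 := fun h => h1 h.symm
                simp [h1, h2, h1']
              · have h1' : S' ≠ A.1 := fun h => h1 h.symm
                simp [h1, h2, h1']
            rw [Finset.sum_congr rfl hrw,
              Finset.sum_ite_eq' (F.filter (fun S' => S ⊂ S')) A.1
                (fun S' => if A.1 ≠ S then -(c S S') else 0)]
            by_cases hSA : S ⊂ A.1
            · rw [if_pos (Finset.mem_filter.mpr ⟨A.2, hSA⟩), if_pos hSA,
                if_pos (Ne.symm hSA.ne)]
            · rw [if_neg (by simp [hSA]), if_neg hSA]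
          rw [Finset.sum_congr rfl h1,
            ← Finset.sum_filter (fun S => S ⊂ A.1) (fun S => -(c S A.1))]
          rw [Finset.sum_neg_distrib, neg_inj]
          calc ∑ B ∈ E.filter (fun B => B ⊂ A.1), c B A.1
              = ∑ B ∈ E.filter (fun B => B ⊂ A.1), cEdge E c B A.1 :=
                Finset.sum_congr rfl (fun B hB => by
                  obtain ⟨hBE, hBA⟩ := Finset.mem_filter.mp hB
                  simp [cEdge, hBE, hBA])
            _ = ∑ B ∈ F.filter (fun B => B ⊂ A.1), cEdge E c B A.1 :=
                Finset.sum_subset (Finset.filter_subset_filter _ hEF) (fun B hBF hBE => by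
                  obtain ⟨-, hBA⟩ := Finset.mem_filter.mp hBF
                  have hB : B ∉ E := fun h => hBE (Finset.mem_filter.mpr ⟨h, hBA⟩)
                  simp [cEdge, hB])

end MinkAux

/-- (Equivalence of implicit and Minkowski-sum descriptions.) The zero-padded
rate vector lies in `(P + C↑^F) ∩ ℝ₊^{F→E}` iff there are nonnegative
split-rates recovering `R` on `E` whose reconstructed rates lie in `P`. -/
theorem minkowski_sum_description (K : ℕ)
    (E F : Finset (Finset (Fin K)))
    (hEF : E ⊆ F) (hne : ∀ S ∈ F, S.Nonempty)
    (P : Set (↥F → ℝ)) (hP : ∀ p ∈ P, ∀ A, 0 ≤ p A)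
    (R : Finset (Fin K) → ℝ) (hR : ∀ S ∈ E, 0 ≤ R S)
    (Rvec : ↥F → ℝ) (hRvec : ∀ A : ↥F, Rvec A = if A.1 ∈ E then R A.1 else 0) :
    (Rvec ∈
        {x : ↥F → ℝ | ∃ p ∈ P, ∃ c : Finset (Fin K) → Finset (Fin K) → ℝ,
          (∀ S S', 0 ≤ c S S') ∧
          x = p + fun A : ↥F =>
            ∑ S ∈ E, ∑ S' ∈ F.filter (fun S' => S ⊂ S'), c S S' * eVecF F S S' A}
      ∩ {x : ↥F → ℝ | (∀ A, 0 ≤ x A) ∧ ∀ A : ↥F, A.1 ∉ E → x A = 0}) ↔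
    (∃ r : Finset (Fin K) → Finset (Fin K) → ℝ,
      (∀ S ∈ E, ∀ S' ∈ F, S ⊆ S' → 0 ≤ r S S') ∧
      (∀ S ∈ E, R S = ∑ S' ∈ F.filter (fun S' => S ⊆ S'), r S S') ∧
      (fun A : ↥F => ∑ S ∈ E.filter (fun S => S ⊆ A.1), r S A.1) ∈ P) := by
  constructor
  · rintro ⟨⟨p, hpP, c, hc, hx⟩, -, -⟩
    set RF : Finset (Fin K) → ℝ := fun A => if A ∈ E then R A else 0 with hRFdef
    set pF : Finset (Fin K) → ℝ := fun A => if h : A ∈ F then p ⟨A, h⟩ else 0 with hpFdef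
    have hpF0 : ∀ A, 0 ≤ pF A := by
      intro A
      by_cases h : A ∈ F
      · simp only [hpFdef, dif_pos h]; exact hP p hpP ⟨A, h⟩
      · simp [hpFdef, h]
    have hRF0 : ∀ A, 0 ≤ RF A := by
      intro A
      by_cases h : A ∈ E <;> simp [hRFdef, h]
      exact hR A h
    have hR0 : ∀ A ∉ E, RF A = 0 := fun A h => by simp [hRFdef, h]
    have hcons : ∀ A ∈ F, RF A + ∑ B ∈ F.filter (fun B => B ⊂ A), cEdge E c B A
        = Tin E F c pF A := by
      intro A hA
      have h0 := congrFun hx ⟨A, hA⟩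
      rw [hRvec ⟨A, hA⟩] at h0
      have h1 : (p + fun A : ↥F =>
          ∑ S ∈ E, ∑ S' ∈ F.filter (fun S' => S ⊂ S'), c S S' * eVecF F S S' A) ⟨A, hA⟩
          = p ⟨A, hA⟩ + ((∑ A' ∈ F.filter (fun A' => A ⊂ A'), cEdge E c A A')
            - ∑ B ∈ F.filter (fun B => B ⊂ A), cEdge E c B A) := by
        rw [Pi.add_apply, cone_eval E F hEF c ⟨A, hA⟩]
      rw [h1] at h0
      have h2 : pF A = p ⟨A, hA⟩ := by simp [hpFdef, hA]
      unfold Tin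
      rw [h2]
      simp only [hRFdef] at h0 ⊢
      linarith
    refine ⟨fun S A => pF A * (fFlow E F c RF pF S A / Tin E F c pF A), ?_, ?_, ?_⟩
    · intro S hS S' hS' hSS'
      exact mul_nonneg (hpF0 S') (div_nonneg (fFlow_nonneg E F hc hRF0 hpF0 S S')
        (Tin_nonneg E F hc hpF0 S'))
    · intro S hS
      have := flow_rowsum E F hEF hc hRF0 hpF0 hR0 hcons hS
      rw [this]
      simp [hRFdef, hS]
    · have hfun : (fun A : ↥F => ∑ S ∈ E.filter (fun S => S ⊆ A.1),
          pF A.1 * (fFlow E F c RF pF S A.1 / Tin E F c pF A.1)) = p := by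
        funext A
        rw [← Finset.mul_sum, ← Finset.sum_div,
          flow_total E F hc hRF0 hpF0 hR0 hcons A.1 A.2]
        have h2 : pF A.1 = p A := by simp [hpFdef, A.2]
        by_cases hT : Tin E F c pF A.1 = 0
        · have hple : pF A.1 = 0 := by
            have h3 : (0:ℝ) ≤ ∑ A' ∈ F.filter (fun A' => A.1 ⊂ A'), cEdge E c A.1 A' :=
              Finset.sum_nonneg fun A' _ => cEdge_nonneg E hc A.1 A'
            have h4 := hpF0 A.1
            unfold Tin at hT
            linarith
          rw [hT, div_zero, mul_zero, ← h2, hple]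
        · rw [div_self hT, mul_one, h2]
      rw [hfun]
      exact hpP
  · rintro ⟨r, hr0, hrR, hrP⟩
    set cR : Finset (Fin K) → Finset (Fin K) → ℝ :=
      fun S S' => if S ∈ E ∧ S' ∈ F ∧ S ⊂ S' then r S S' else 0 with hcRdef
    have hcR0 : ∀ S S', 0 ≤ cR S S' := by
      intro S S'
      simp only [hcRdef]
      split
      · next h => exact hr0 S h.1 S' h.2.1 h.2.2.subset
      · exact le_refl 0
    refine ⟨⟨_, hrP, cR, hcR0, ?_⟩, ⟨?_, ?_⟩⟩
    · funext A
      rw [Pi.add_apply, cone_eval E F hEF cR A, hRvec A]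
      have hout : ∑ A' ∈ F.filter (fun A' => A.1 ⊂ A'), cEdge E cR A.1 A'
          = if A.1 ∈ E then ∑ A' ∈ F.filter (fun A' => A.1 ⊂ A'), r A.1 A' else 0 := by
        by_cases hAE : A.1 ∈ E
        · rw [if_pos hAE]
          refine Finset.sum_congr rfl fun A' hA' => ?_
          obtain ⟨hA'F, hAA'⟩ := Finset.mem_filter.mp hA'
          simp [cEdge, hcRdef, hAE, hAA', hA'F]
        · rw [if_neg hAE]
          exact Finset.sum_eq_zero fun A' _ => by simp [cEdge, hAE]
      have hin : ∑ B ∈ F.filter (fun B => B ⊂ A.1), cEdge E cR B A.1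
          = ∑ B ∈ E.filter (fun B => B ⊂ A.1), r B A.1 := by
        rw [← Finset.sum_subset (Finset.filter_subset_filter _ hEF)
          (fun B hBF hBE => ?_)]
        · refine Finset.sum_congr rfl fun B hB => ?_
          obtain ⟨hBE, hBA⟩ := Finset.mem_filter.mp hB
          simp [cEdge, hcRdef, hBE, hBA, A.2]
        · obtain ⟨-, hBA⟩ := Finset.mem_filter.mp hBF
          have hB : B ∉ E := fun h => hBE (Finset.mem_filter.mpr ⟨h, hBA⟩)
          simp [cEdge, hB]
      have hsplitE : ∑ S ∈ E.filter (fun S => S ⊆ A.1), r S A.1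
          = (if A.1 ∈ E then r A.1 A.1 else 0)
            + ∑ S ∈ E.filter (fun S => S ⊂ A.1), r S A.1 :=
        sum_filter_subset_split E A.1 (fun S => r S A.1)
      rw [hout, hin, hsplitE]
      by_cases hAE : A.1 ∈ E
      · rw [if_pos hAE, if_pos hAE, if_pos hAE, hrR A.1 hAE,
          sum_filter_supset_split F A.1 (fun S' => r A.1 S'), if_pos A.2]
        ring
      · rw [if_neg hAE, if_neg hAE, if_neg hAE]
        ring
    · intro A
      rw [hRvec A]
      by_cases hAE : A.1 ∈ E
      · rw [if_pos hAE]; exact hR A.1 hAE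
      · rw [if_neg hAE]
    · intro A hAE
      rw [hRvec A, if_neg hAE]
end

section
/- (Redundant decoding inequalities.) Let W be a finite poset and g : 2^W → ℝ a set function such that g(B) = I(U_{↓B}; Y | U_{W \ ↓B}) for subsets B ⊆ W (mutual information with respect to finitely-valued random variables). Then a nonnegative vector (R_S : S∈W) satisfies Σ_{S∈B} R_S ≤ g(B) for every subset B ⊆ W if and only if it satisfies Σ_{S∈B} R_S ≤ I(U_B; Y | U_{W\B}) for every down-set B of W. -/
open Finset

variable {Ω : Type*} [Fintype Ω]

/-- Probability that the random variable `X` takes the value `b`. -/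
noncomputable def pOf {β : Type*} [DecidableEq β] (μ : Ω → ℝ) (X : Ω → β) (b : β) : ℝ :=
  ∑ ω : Ω, if X ω = b then μ ω else 0

/-- Shannon entropy (base 2) of a finitely-valued random variable. -/
noncomputable def entRV {β : Type*} [Fintype β] [DecidableEq β] (μ : Ω → ℝ) (X : Ω → β) : ℝ :=
  -∑ b : β, pOf μ X b * Real.logb 2 (pOf μ X b)

variable {E α : Type*} [Fintype E] [DecidableEq E] [Fintype α] [DecidableEq α]

/-- The tuple of random variables indexed by a finite index set `G`. -/
def tupRV (U : E → Ω → α) (G : Finset E) : Ω → (↥G → α) := fun ω S => U S.1 ω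

/-- Joint entropy `H(U_G)`. -/
noncomputable def jentU (μ : Ω → ℝ) (U : E → Ω → α) (G : Finset E) : ℝ :=
  entRV μ (tupRV U G)

/-- Conditional entropy `H(U_A | U_B)`. -/
noncomputable def centU (μ : Ω → ℝ) (U : E → Ω → α) (A B : Finset E) : ℝ :=
  jentU μ U (A ∪ B) - jentU μ U B

/-- Conditional mutual information `I(X ; Y | Z)`. -/
noncomputable def cmiRV {β γ' δ' : Type*} [Fintype β] [DecidableEq β]
    [Fintype γ'] [DecidableEq γ'] [Fintype δ'] [DecidableEq δ']
    (μ : Ω → ℝ) (X : Ω → β) (Y : Ω → γ') (Z : Ω → δ') : ℝ :=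
  entRV μ (fun ω => (X ω, Z ω)) + entRV μ (fun ω => (Y ω, Z ω))
    - entRV μ (fun ω => (X ω, Y ω, Z ω)) - entRV μ Z

variable [PartialOrder E] [DecidableRel (α := E) (· ≤ ·)]

/-- `↓B`: the smallest down-set containing `B` in a finite poset. -/
def ddF (B : Finset E) : Finset E :=
  Finset.univ.filter (fun x => ∃ y ∈ B, x ≤ y)

/-- (Redundant decoding inequalities.) A nonnegative rate vector satisfies
`Σ_{S∈B} R_S ≤ I(U_{↓B};Y|U_{W∖↓B})` for every subset `B` of the finite poset
`W` iff it satisfies `Σ_{S∈B} R_S ≤ I(U_B;Y|U_{W∖B})` for every down-set `B`. -/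
theorem redundant_decoding_inequalities
    {β : Type*} [Fintype β] [DecidableEq β]
    (μ : Ω → ℝ) (hμ : ∀ ω, 0 ≤ μ ω) (hμ1 : ∑ ω : Ω, μ ω = 1)
    (U : E → Ω → α) (Y : Ω → β)
    (g : Finset E → ℝ)
    (hg : ∀ B : Finset E,
      g B = cmiRV μ (tupRV U (ddF B)) Y (tupRV U (Finset.univ \ ddF B)))
    (R : E → ℝ) (hR : ∀ S, 0 ≤ R S) :
    (∀ B : Finset E, ∑ S ∈ B, R S ≤ g B) ↔
    (∀ B : Finset E, (∀ x ∈ B, ∀ y, y ≤ x → y ∈ B) →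
      ∑ S ∈ B, R S ≤ cmiRV μ (tupRV U B) Y (tupRV U (Finset.univ \ B))) := by
  have hsub : ∀ B : Finset E, B ⊆ ddF B := by
    intro B x hx
    simp [ddF]
    exact ⟨x, hx, le_refl x⟩
  have hdd : ∀ B : Finset E, ∀ x ∈ ddF B, ∀ y, y ≤ x → y ∈ ddF B := by
    intro B x hx y hyx
    simp [ddF] at hx ⊢
    obtain ⟨z, hz, hxz⟩ := hx
    exact ⟨z, hz, le_trans hyx hxz⟩
  have heq : ∀ B : Finset E, (∀ x ∈ B, ∀ y, y ≤ x → y ∈ B) → ddF B = B := by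
    intro B hB
    apply Finset.Subset.antisymm
    · intro x hx
      simp [ddF] at hx
      obtain ⟨z, hz, hxz⟩ := hx
      exact hB z hz x hxz
    · exact hsub B
  constructor
  · intro h B hB
    have := h B
    rw [hg B, heq B hB] at this
    exact this
  · intro h B
    rw [hg B]
    calc ∑ S ∈ B, R S ≤ ∑ S ∈ ddF B, R S :=
          Finset.sum_le_sum_of_subset_of_nonneg (hsub B) (fun i _ _ => hR i)
      _ ≤ _ := h (ddF B) (hdd B)
end

section
/- (Polymatroid structure of the receiver region.) Let (U_S : S∈W) and Y be finitely-valued random variables, where W is a finite poset with a fixed factorization of the joint law consistent with the poset (superposition-admitting). Define ρ(B) = I(U_B ; Y | U_{W\B}) for down-sets B of W, assuming the auxiliary variables (U_S) satisfy the Markov structure p(U_W) = Π_S p(U_S | U_{↑{S}\{S}}). Then ρ, restricted to the down-set lattice of W, is normalized (ρ(∅)=0), non-decreasing (ρ(B) ≤ ρ(B') for down-sets B ⊆ B'), and submodular (ρ(B∩B') + ρ(B∪B') ≤ ρ(B) + ρ(B') for down-sets B, B'), i.e., the region {R ≥ 0 : R(B) ≤ ρ(B) for all down-sets B} projects to a polymatroid.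 -/
/-!
For a down-set `B` put `G = W \ B`, an up-set; then `ρ(B) = H(Y | U_G) - H(Y | U_W)`.
Normalization is immediate and monotonicity is "conditioning reduces entropy". For
submodularity write `H(Y | U_G) = H(U_G, Y) - H(U_G)`: the first term is submodular in `G` by
strong subadditivity, and the second is modular on up-sets, because the factorization makes the
marginal of `U_G` on an up-set `G` equal to `∏_{S ∈ G} p(u_S | u_{↑S ∖ S})`. Pointwise this
is an inequality `≤` (sum out a minimal element of `G`: its factor sums to at most one), and the
total masses compare the other way, again by summing out minimal elements.
-/

open Finset

variable {Ω : Type*} [Fintype Ω]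

variable {E α : Type*} [Fintype E] [DecidableEq E] [Fintype α] [DecidableEq α]

variable [PartialOrder E] [DecidableRel (α := E) (· ≤ ·)]

/-- The up-set `↑{S}` of an element in a finite poset. -/
def upF (S : E) : Finset E := Finset.univ.filter (S ≤ ·)

/-- The marginal, on the coordinates in `A`, of a pmf `q` on tuples. -/
noncomputable def margOn (q : (E → α) → ℝ) (A : Finset E) (u : E → α) : ℝ :=
  ∑ v : E → α, if ∀ a ∈ A, v a = u a then q v else 0

/-- The conditional probability `q(u_S | u_A)`. -/
noncomputable def condP (q : (E → α) → ℝ) (A : Finset E) (S : E) (u : E → α) : ℝ :=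
  margOn q (insert S A) u / margOn q A u

section Entropy

omit [PartialOrder E] [DecidableRel (α := E) (· ≤ ·)]

/-- The pointwise form of Gibbs' inequality behind strong subadditivity, from
`log x ≤ x - 1` at `x = a b / (c p)`. -/
lemma mul_logb_ratio_le {p a b c : ℝ} (hp : 0 ≤ p) (ha : p ≤ a) (hb : p ≤ b) (hc : p ≤ c) :
    p * (Real.logb 2 a + Real.logb 2 b - Real.logb 2 p - Real.logb 2 c)
      ≤ (a * b / c - p) / Real.log 2 := by
  rw [le_div_iff₀ (Real.log_pos one_lt_two)]
  rcases hp.eq_or_lt with rfl | hp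
  · simpa using div_nonneg (mul_nonneg ha hb) hc
  have ha := hp.trans_le ha
  have hb := hp.trans_le hb
  have hc := hp.trans_le hc
  have hlog := Real.log_le_sub_one_of_pos (x := a * b / (c * p)) (by positivity)
  rw [Real.log_div (by positivity) (by positivity), Real.log_mul ha.ne' hb.ne',
    Real.log_mul hc.ne' hp.ne'] at hlog
  calc _ = p * (Real.log a + Real.log b - (Real.log c + Real.log p)) := by
        simp only [Real.logb]
        field_simp
        ring
    _ ≤ p * (a * b / (c * p) - 1) := by gcongr
    _ = a * b / c - p := by field_simp

lemma sum_mul_div_eq_of_marginals {β γ δ : Type*} [Fintype β] [Fintype γ] [Fintype δ]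
    {a : β × δ → ℝ} {b : γ × δ → ℝ} {c : δ → ℝ}
    (ha : ∀ z, ∑ x, a (x, z) = c z) (hb : ∀ z, ∑ y, b (y, z) = c z) :
    ∑ t : β × γ × δ, a (t.1, t.2.2) * b t.2 / c t.2.2 = ∑ z, c z := by
  have hz : ∀ z, ∑ x, ∑ y, a (x, z) * b (y, z) / c z = c z := fun z => by
    simp_rw [mul_div_assoc, ← mul_sum, ← sum_mul, ← sum_div, ha, hb, ← mul_div_assoc,
      mul_self_div_self]
  simp only [Fintype.sum_prod_type]
  rw [← sum_congr rfl fun z _ => hz z]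
  exact (sum_congr rfl fun x _ => sum_comm).trans sum_comm

variable {β γ δ : Type*} [DecidableEq β] [DecidableEq γ] [DecidableEq δ] {μ : Ω → ℝ}

lemma pOf_nonneg (hμ : ∀ ω, 0 ≤ μ ω) (X : Ω → β) (b : β) : 0 ≤ pOf μ X b :=
  sum_nonneg fun ω _ => by split_ifs <;> simp [hμ ω]

lemma le_pOf_self (hμ : ∀ ω, 0 ≤ μ ω) (X : Ω → β) (ω : Ω) : μ ω ≤ pOf μ X (X ω) := by
  simpa [pOf] using single_le_sum (fun ω' _ => by split_ifs <;> simp [hμ ω']) (mem_univ ω)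
    (f := fun ω' => if X ω' = X ω then μ ω' else 0)

lemma pOf_le_pOf_comp (hμ : ∀ ω, 0 ≤ μ ω) (X : Ω → β) (f : β → γ) (b : β) :
    pOf μ X b ≤ pOf μ (fun ω => f (X ω)) (f b) :=
  sum_le_sum fun ω _ => by
    by_cases h : X ω = b
    · simp [h]
    · rw [if_neg h]; split_ifs <;> simp [hμ ω]

lemma sum_pOf_mul [Fintype β] (μ : Ω → ℝ) (X : Ω → β) (F : β → ℝ) :
    ∑ b, pOf μ X b * F b = ∑ ω, μ ω * F (X ω) := by
  simp only [pOf, sum_mul, ite_mul, zero_mul]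
  rw [sum_comm]
  simp

lemma sum_pOf [Fintype β] (μ : Ω → ℝ) (X : Ω → β) : ∑ b, pOf μ X b = ∑ ω, μ ω := by
  simpa using sum_pOf_mul μ X 1

lemma sum_pOf_pair [Fintype β] (μ : Ω → ℝ) (X : Ω → β) (Z : Ω → δ) (z : δ) :
    ∑ x, pOf μ (fun ω => (X ω, Z ω)) (x, z) = pOf μ Z z := by
  simp only [pOf, Prod.ext_iff]
  rw [sum_comm]
  simp [ite_and]

lemma entRV_eq_sum [Fintype β] (μ : Ω → ℝ) (X : Ω → β) :
    entRV μ X = -∑ ω, μ ω * Real.logb 2 (pOf μ X (X ω)) := by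
  rw [entRV, sum_pOf_mul μ X fun b => Real.logb 2 (pOf μ X b)]

lemma entRV_comp_eq_sum [Fintype β] [Fintype γ] (μ : Ω → ℝ) (X : Ω → β) (f : β → γ) :
    entRV μ (fun ω => f (X ω))
      = -∑ b, pOf μ X b * Real.logb 2 (pOf μ (fun ω => f (X ω)) (f b)) := by
  rw [entRV_eq_sum, sum_pOf_mul μ X fun b => Real.logb 2 (pOf μ (fun ω => f (X ω)) (f b))]

lemma entRV_eq_of_eq_iff [Fintype β] [Fintype γ] (μ : Ω → ℝ) {X : Ω → β} {X' : Ω → γ}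
    (h : ∀ ω ω', X ω = X ω' ↔ X' ω = X' ω') : entRV μ X = entRV μ X' := by
  have hp : ∀ ω, pOf μ X (X ω) = pOf μ X' (X' ω) := fun ω =>
    sum_congr rfl fun ω' _ => if_congr (h ω' ω) rfl rfl
  simp only [entRV_eq_sum, hp]

theorem entRV_add_entRV_le [Fintype β] [Fintype γ] [Fintype δ] (hμ : ∀ ω, 0 ≤ μ ω)
    (X : Ω → β) (Y : Ω → γ) (Z : Ω → δ) :
    entRV μ (fun ω => (X ω, Y ω, Z ω)) + entRV μ Z
      ≤ entRV μ (fun ω => (X ω, Z ω)) + entRV μ (fun ω => (Y ω, Z ω)) := by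
  set T := fun ω => (X ω, Y ω, Z ω)
  set p := pOf μ T
  set a := pOf μ (fun ω => (X ω, Z ω))
  set b := pOf μ (fun ω => (Y ω, Z ω))
  set c := pOf μ Z
  set r : β × γ × δ → ℝ := fun t => a (t.1, t.2.2) * b t.2 / c t.2.2
  have key : ∀ t, p t * (Real.logb 2 (a (t.1, t.2.2)) + Real.logb 2 (b t.2)
      - Real.logb 2 (p t) - Real.logb 2 (c t.2.2)) ≤ (r t - p t) / Real.log 2 := fun t =>
    mul_logb_ratio_le (pOf_nonneg hμ T t) (pOf_le_pOf_comp hμ T (fun t => (t.1, t.2.2)) t)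
      (pOf_le_pOf_comp hμ T (fun t => t.2) t) (pOf_le_pOf_comp hμ T (fun t => t.2.2) t)
  have hr : ∑ t, r t = ∑ t, p t := by
    rw [sum_mul_div_eq_of_marginals (sum_pOf_pair μ X Z) (sum_pOf_pair μ Y Z), sum_pOf, sum_pOf]
  have hsum := sum_le_sum fun t (_ : t ∈ univ) => key t
  rw [← sum_div, sum_sub_distrib, hr, sub_self, zero_div] at hsum
  simp only [mul_add, mul_sub, sum_add_distrib, sum_sub_distrib] at hsum
  rw [entRV_comp_eq_sum μ T fun t => (t.1, t.2.2), entRV_comp_eq_sum μ T fun t => t.2,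
    entRV_comp_eq_sum μ T fun t => t.2.2]
  change -∑ t, p t * Real.logb 2 (p t) + _ ≤ _
  linarith

end Entropy

section CondEnt

omit [Fintype E] [PartialOrder E] [DecidableRel (α := E) (· ≤ ·)]

variable {β γ δ : Type*} [Fintype β] [DecidableEq β] [Fintype γ] [DecidableEq γ]
  [Fintype δ] [DecidableEq δ] {μ : Ω → ℝ}

noncomputable def condEnt (μ : Ω → ℝ) (Y : Ω → β) (Z : Ω → γ) : ℝ :=
  entRV μ (fun ω => (Z ω, Y ω)) - entRV μ Z

lemma condEnt_congr (μ : Ω → ℝ) (Y : Ω → β) {Z : Ω → γ} {Z' : Ω → δ}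
    (h : ∀ ω ω', Z ω = Z ω' ↔ Z' ω = Z' ω') : condEnt μ Y Z = condEnt μ Y Z' := by
  rw [condEnt, condEnt, entRV_eq_of_eq_iff μ h,
    entRV_eq_of_eq_iff μ (X := fun ω => (Z ω, Y ω)) (X' := fun ω => (Z' ω, Y ω))
      fun ω ω' => by simp only [Prod.ext_iff, h]]

lemma cmiRV_eq_condEnt_sub (μ : Ω → ℝ) (X : Ω → β) (Y : Ω → γ) (Z : Ω → δ) :
    cmiRV μ X Y Z = condEnt μ Y Z - condEnt μ Y (fun ω => (X ω, Z ω)) := by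
  have hYZ := entRV_eq_of_eq_iff μ (X := fun ω => (Y ω, Z ω)) (X' := fun ω => (Z ω, Y ω))
    fun ω ω' => by simp only [Prod.ext_iff, and_comm]
  have hXYZ := entRV_eq_of_eq_iff μ (X := fun ω => (X ω, Y ω, Z ω))
    (X' := fun ω => ((X ω, Z ω), Y ω)) fun ω ω' => by
      simp only [Prod.ext_iff]; tauto
  rw [cmiRV, condEnt, condEnt, hYZ, hXYZ]
  ring

lemma condEnt_pair_le (hμ : ∀ ω, 0 ≤ μ ω) (X : Ω → β) (Y : Ω → γ) (Z : Ω → δ) :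
    condEnt μ Y (fun ω => (X ω, Z ω)) ≤ condEnt μ Y Z := by
  have := entRV_add_entRV_le hμ X Y Z
  rw [← sub_nonneg, ← cmiRV_eq_condEnt_sub, cmiRV]
  linarith

variable (U : E → Ω → α)

lemma condEnt_tupRV_anti (hμ : ∀ ω, 0 ≤ μ ω) (Y : Ω → β) {G G' : Finset E} (h : G' ⊆ G) :
    condEnt μ Y (tupRV U G) ≤ condEnt μ Y (tupRV U G') := by
  rw [condEnt_congr μ Y (Z' := fun ω => (tupRV U G ω, tupRV U G' ω)) fun ω ω' => by
    simp [Prod.ext_iff, tupRV, funext_iff]; grind]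
  exact condEnt_pair_le hμ _ Y _

lemma cmiRV_tupRV_eq (μ : Ω → ℝ) (Y : Ω → β) (A C : Finset E) :
    cmiRV μ (tupRV U A) Y (tupRV U C)
      = condEnt μ Y (tupRV U C) - condEnt μ Y (tupRV U (A ∪ C)) := by
  rw [cmiRV_eq_condEnt_sub, condEnt_congr μ Y (Z := fun ω => (tupRV U A ω, tupRV U C ω))
    (Z' := tupRV U (A ∪ C)) fun ω ω' => by simp [Prod.ext_iff, tupRV, funext_iff]; grind]

lemma entRV_tupRV_union_add_inter_le (hμ : ∀ ω, 0 ≤ μ ω) (W : Ω → β) (G G' : Finset E) :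
    entRV μ (fun ω => (tupRV U (G ∪ G') ω, W ω)) + entRV μ (fun ω => (tupRV U (G ∩ G') ω, W ω))
      ≤ entRV μ (fun ω => (tupRV U G ω, W ω)) + entRV μ (fun ω => (tupRV U G' ω, W ω)) := by
  have hssa := entRV_add_entRV_le hμ (tupRV U G) (tupRV U G') fun ω => (tupRV U (G ∩ G') ω, W ω)
  have hunion : entRV μ (fun ω => (tupRV U G ω, tupRV U G' ω, tupRV U (G ∩ G') ω, W ω))
      = entRV μ (fun ω => (tupRV U (G ∪ G') ω, W ω)) :=
    entRV_eq_of_eq_iff μ fun ω ω' => by simp [Prod.ext_iff, tupRV, funext_iff]; grind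
  have hleft : entRV μ (fun ω => (tupRV U G ω, tupRV U (G ∩ G') ω, W ω))
      = entRV μ (fun ω => (tupRV U G ω, W ω)) :=
    entRV_eq_of_eq_iff μ fun ω ω' => by simp [Prod.ext_iff, tupRV, funext_iff]; grind
  have hright : entRV μ (fun ω => (tupRV U G' ω, tupRV U (G ∩ G') ω, W ω))
      = entRV μ (fun ω => (tupRV U G' ω, W ω)) :=
    entRV_eq_of_eq_iff μ fun ω ω' => by simp [Prod.ext_iff, tupRV, funext_iff]; grind
  linarith

end CondEnt

section Marginal

omit [PartialOrder E] [DecidableRel (α := E) (· ≤ ·)]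

variable (q : (E → α) → ℝ)

lemma margOn_univ (u : E → α) : margOn q univ u = q u := by
  simp [margOn, ← funext_iff]

lemma margOn_empty (u : E → α) : margOn q ∅ u = ∑ v, q v := by
  simp [margOn]

lemma margOn_congr {A : Finset E} {u u' : E → α} (h : ∀ a ∈ A, u a = u' a) :
    margOn q A u = margOn q A u' :=
  sum_congr rfl fun v _ => if_congr (forall₂_congr fun a ha => by rw [h a ha]) rfl rfl

lemma margOn_eq_sum_margOn_insert {A : Finset E} {S : E} (hS : S ∉ A) (u : E → α) :
    margOn q A u = ∑ a, margOn q (insert S A) (Function.update u S a) := by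
  unfold margOn
  rw [sum_comm]
  refine sum_congr rfl fun v _ => ?_
  have hcond : ∀ a, (∀ x ∈ insert S A, v x = Function.update u S a x)
      ↔ (v S = a ∧ ∀ x ∈ A, v x = u x) := fun a => by
    simp only [forall_mem_insert, Function.update_self]
    exact and_congr_right' <| forall₂_congr fun x hx => by
      rw [Function.update_of_ne (ne_of_mem_of_not_mem hx hS)]
  simp only [hcond, ite_and]
  simp

lemma condP_update_of_notMem {A : Finset E} {S M : E} (hM : M ∉ insert S A) (u : E → α) (a : α) :
    condP q A S (Function.update u M a) = condP q A S u := by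
  have h : ∀ B ⊆ insert S A, ∀ x ∈ B, Function.update u M a x = u x := fun B hB x hx =>
    Function.update_of_ne (ne_of_mem_of_not_mem (hB hx) hM) _ _
  rw [condP, condP, margOn_congr q (h _ subset_rfl), margOn_congr q (h _ (subset_insert S A))]

/-- Only `≤`: the sum vanishes where the conditioning marginal does, since `x / 0 = 0`. -/
lemma sum_condP_update_le_one {A : Finset E} {S : E} (hS : S ∉ A) (u : E → α) :
    ∑ a, condP q A S (Function.update u S a) ≤ 1 := by
  have hden : ∀ a, margOn q A (Function.update u S a) = margOn q A u := fun a =>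
    margOn_congr q fun x hx => Function.update_of_ne (ne_of_mem_of_not_mem hx hS) _ _
  simp only [condP, hden, ← sum_div, ← margOn_eq_sum_margOn_insert q hS]
  exact div_self_le_one _

lemma condP_nonneg (hq0 : ∀ v, 0 ≤ q v) (A : Finset E) (S : E) (u : E → α) :
    0 ≤ condP q A S u := by
  have h : ∀ B u, 0 ≤ margOn q B u := fun B u =>
    sum_nonneg fun v _ => by split_ifs <;> simp [hq0 v]
  exact div_nonneg (h _ _) (h _ _)

omit [DecidableEq α] in
lemma sum_sum_update (M : E) (g : (E → α) → ℝ) :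
    ∑ v, ∑ a, g (Function.update v M a) = Fintype.card α * ∑ v, g v := by
  have hinv : Function.Involutive fun p : (E → α) × α => (Function.update p.1 M p.2, p.1 M) :=
    fun p => by simp
  rw [← Fintype.sum_prod_type']
  refine (Equiv.sum_comp (hinv.toPerm _) fun p => g p.1).trans ?_
  simp [Fintype.sum_prod_type, mul_sum]

end Marginal

lemma erase_minimal_induction {ι : Type*} [PartialOrder ι] [DecidableEq ι]
    {P : Finset ι → Prop} (h_empty : P ∅)
    (h_erase : ∀ (G : Finset ι) M, Minimal (· ∈ G) M → P (G.erase M) → P G) (G : Finset ι) :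
    P G := by
  induction G using Finset.strongInduction with
  | H G ih =>
    rcases G.eq_empty_or_nonempty with rfl | hne
    · exact h_empty
    · obtain ⟨M, hM⟩ := G.exists_minimal hne
      exact h_erase G M hM (ih _ (erase_ssubset hM.1))

lemma upperSet_erase_minimal_induction {ι : Type*} [Fintype ι] [PartialOrder ι] [DecidableEq ι]
    {P : Finset ι → Prop} (h_univ : P univ)
    (h_erase : ∀ (G : Finset ι) M, IsUpperSet (G : Set ι) → Minimal (· ∈ G) M → P G →
      P (G.erase M))
    (G : Finset ι) (hG : IsUpperSet (G : Set ι)) : P G := by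
  refine Finset.strongDownwardInductionOn (n := Fintype.card ι)
    (p := fun G => IsUpperSet (G : Set ι) → P G) G ?_ (card_le_univ G) hG
  intro G ih _ hG
  by_cases hGu : G = univ
  · exact hGu ▸ h_univ
  obtain ⟨S, hS⟩ := (univ \ G).exists_maximal <| by
    simpa [sdiff_nonempty, eq_univ_iff_forall] using hGu
  have hSG : S ∉ G := (mem_sdiff.1 hS.1).2
  have hH : IsUpperSet (↑(insert S G) : Set ι) := by
    intro a b hab ha
    simp only [coe_insert, Set.mem_insert_iff, mem_coe] at ha ⊢
    rcases ha with rfl | ha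
    · exact or_iff_not_imp_right.2 fun hb => le_antisymm (hS.2 (by simp [hb]) hab) hab
    · exact Or.inr (hG hab ha)
  have hmin : Minimal (· ∈ insert S G) S := by
    refine ⟨mem_insert_self S G, fun y hy hyS => ?_⟩
    rcases mem_insert.1 hy with rfl | hy
    · exact le_rfl
    · exact absurd (hG hyS hy) hSG
  simpa [erase_insert hSG] using h_erase _ S hH hmin (ih (card_le_univ _) (ssubset_insert hSG) hH)

section Factorization

variable (q : (E → α) → ℝ)

noncomputable def factorProd (G : Finset E) (u : E → α) : ℝ :=
  ∏ S ∈ G, condP q (upF S \ {S}) S u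

lemma factorProd_erase_update {G : Finset E} {M : E} (hM : Minimal (· ∈ G) M) (v : E → α)
    (a : α) : factorProd q (G.erase M) (Function.update v M a) = factorProd q (G.erase M) v := by
  refine prod_congr rfl fun R hR => condP_update_of_notMem q ?_ v a
  obtain ⟨hRM, hRG⟩ := mem_erase.1 hR
  simp only [mem_insert, mem_sdiff, upF, mem_filter, mem_univ, true_and, mem_singleton]
  rintro (rfl | ⟨hRle, -⟩)
  · exact hRM rfl
  · exact hRM (le_antisymm hRle (hM.2 hRG hRle))

lemma sum_factorProd_update_le (hq0 : ∀ v, 0 ≤ q v) {G : Finset E} {M : E}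
    (hM : Minimal (· ∈ G) M) (v : E → α) :
    ∑ a, factorProd q G (Function.update v M a) ≤ factorProd q (G.erase M) v := by
  have hM' : M ∉ upF M \ {M} := fun h => (mem_sdiff.1 h).2 (mem_singleton_self M)
  calc ∑ a, factorProd q G (Function.update v M a)
      = (∑ a, condP q (upF M \ {M}) M (Function.update v M a)) * factorProd q (G.erase M) v := by
        rw [sum_mul]
        refine sum_congr rfl fun a _ => ?_
        rw [← factorProd_erase_update q hM v a, factorProd, factorProd, ← mul_prod_erase G _ hM.1]
    _ ≤ factorProd q (G.erase M) v :=
        mul_le_of_le_one_left (prod_nonneg fun R _ => condP_nonneg q hq0 _ _ _)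
          (sum_condP_update_le_one q hM' v)

lemma margOn_le_factorProd (hq0 : ∀ v, 0 ≤ q v) (hfact : ∀ u, q u = factorProd q univ u)
    {G : Finset E} (hG : IsUpperSet (G : Set E)) (u : E → α) :
    margOn q G u ≤ factorProd q G u := by
  refine upperSet_erase_minimal_induction (P := fun G => ∀ u, margOn q G u ≤ factorProd q G u)
    (fun u => (margOn_univ q u).trans_le (hfact u).le) (fun G M _ hM ih u => ?_) G hG u
  calc margOn q (G.erase M) u = ∑ a, margOn q G (Function.update u M a) := by
        rw [margOn_eq_sum_margOn_insert q (notMem_erase M G), insert_erase hM.1]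
    _ ≤ ∑ a, factorProd q G (Function.update u M a) := sum_le_sum fun a _ => ih _
    _ ≤ factorProd q (G.erase M) u := sum_factorProd_update_le q hq0 hM u

lemma sum_factorProd_le_sum_margOn (hq0 : ∀ v, 0 ≤ q v) (hq1 : ∑ v, q v = 1) (G : Finset E) :
    ∑ v, factorProd q G v ≤ ∑ v, margOn q G v := by
  induction G using erase_minimal_induction with
  | h_empty => simp [factorProd, margOn_empty, hq1]
  | h_erase G M hM ih =>
    obtain ⟨v₀, -, -⟩ := exists_ne_zero_of_sum_ne_zero (hq1.trans_ne one_ne_zero)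
    have hα : (0 : ℝ) < Fintype.card α := Nat.cast_pos.2 (Fintype.card_pos_iff.2 ⟨v₀ M⟩)
    refine le_of_mul_le_mul_left ?_ hα
    calc (Fintype.card α : ℝ) * ∑ v, factorProd q G v
        = ∑ v, ∑ a, factorProd q G (Function.update v M a) := (sum_sum_update M _).symm
      _ ≤ ∑ v, factorProd q (G.erase M) v :=
          sum_le_sum fun v _ => sum_factorProd_update_le q hq0 hM v
      _ ≤ ∑ v, margOn q (G.erase M) v := ih
      _ = ∑ v, ∑ a, margOn q G (Function.update v M a) := by
          simp only [margOn_eq_sum_margOn_insert q (notMem_erase M G), insert_erase hM.1]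
      _ = Fintype.card α * ∑ v, margOn q G v := sum_sum_update M _

lemma margOn_eq_factorProd (hq0 : ∀ v, 0 ≤ q v) (hq1 : ∑ v, q v = 1)
    (hfact : ∀ u, q u = factorProd q univ u) {G : Finset E} (hG : IsUpperSet (G : Set E))
    (u : E → α) : margOn q G u = factorProd q G u := by
  have hle := fun v => margOn_le_factorProd q hq0 hfact hG v
  exact (sum_eq_sum_iff_of_le fun v _ => hle v).1
    ((sum_le_sum fun v _ => hle v).antisymm (sum_factorProd_le_sum_margOn q hq0 hq1 G)) u
    (mem_univ u)

lemma margOn_union_mul_margOn_inter (hq0 : ∀ v, 0 ≤ q v) (hq1 : ∑ v, q v = 1)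
    (hfact : ∀ u, q u = factorProd q univ u) {G G' : Finset E} (hG : IsUpperSet (G : Set E))
    (hG' : IsUpperSet (G' : Set E)) (u : E → α) :
    margOn q (G ∪ G') u * margOn q (G ∩ G') u = margOn q G u * margOn q G' u := by
  have hU : IsUpperSet (↑(G ∪ G') : Set E) := coe_union G G' ▸ hG.union hG'
  have hI : IsUpperSet (↑(G ∩ G') : Set E) := coe_inter G G' ▸ hG.inter hG'
  simp only [margOn_eq_factorProd q hq0 hq1 hfact, hG, hG', hU, hI]
  exact prod_union_inter

end Factorization

section Modularity

variable {μ : Ω → ℝ} (U : E → Ω → α)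

omit [PartialOrder E] [DecidableRel (α := E) (· ≤ ·)] in
lemma margOn_pOf_eq_pOf_tupRV (G : Finset E) (ω : Ω) :
    margOn (pOf μ fun ω S => U S ω) G (fun S => U S ω) = pOf μ (tupRV U G) (tupRV U G ω) := by
  have := sum_pOf_mul μ (fun ω S => U S ω) fun v => if ∀ a ∈ G, v a = U a ω then 1 else 0
  simp only [mul_boole] at this
  rw [margOn, this]
  simp [pOf, tupRV, funext_iff]

theorem jentU_union_add_jentU_inter (hμ : ∀ ω, 0 ≤ μ ω) (hμ1 : ∑ ω, μ ω = 1)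
    (hfact : ∀ u, pOf μ (fun ω S => U S ω) u = factorProd (pOf μ fun ω S => U S ω) univ u)
    {G G' : Finset E} (hG : IsUpperSet (G : Set E)) (hG' : IsUpperSet (G' : Set E)) :
    jentU μ U (G ∪ G') + jentU μ U (G ∩ G') = jentU μ U G + jentU μ U G' := by
  have hH : ∀ H, jentU μ U H
      = -∑ ω, μ ω * Real.logb 2 (margOn (pOf μ fun ω S => U S ω) H fun S => U S ω) :=
    fun H => by simp only [jentU, entRV_eq_sum, margOn_pOf_eq_pOf_tupRV]
  have hpos : ∀ H ω, 0 < μ ω → 0 < margOn (pOf μ fun ω S => U S ω) H fun S => U S ω :=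
    fun H ω h => margOn_pOf_eq_pOf_tupRV U H ω ▸ h.trans_le (le_pOf_self hμ _ ω)
  simp only [hH, ← neg_add, ← sum_add_distrib, ← mul_add]
  congr 1
  refine sum_congr rfl fun ω _ => ?_
  rcases (hμ ω).eq_or_lt with h0 | h
  · simp [← h0]
  · rw [← Real.logb_mul (hpos _ ω h).ne' (hpos _ ω h).ne',
      ← Real.logb_mul (hpos _ ω h).ne' (hpos _ ω h).ne',
      margOn_union_mul_margOn_inter _ (pOf_nonneg hμ _) ((sum_pOf μ _).trans hμ1) hfact hG hG']

theorem condEnt_tupRV_union_add_inter_le {β : Type*} [Fintype β] [DecidableEq β]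
    (hμ : ∀ ω, 0 ≤ μ ω) (hμ1 : ∑ ω, μ ω = 1)
    (hfact : ∀ u, pOf μ (fun ω S => U S ω) u = factorProd (pOf μ fun ω S => U S ω) univ u)
    (Y : Ω → β)
    {G G' : Finset E} (hG : IsUpperSet (G : Set E)) (hG' : IsUpperSet (G' : Set E)) :
    condEnt μ Y (tupRV U (G ∪ G')) + condEnt μ Y (tupRV U (G ∩ G'))
      ≤ condEnt μ Y (tupRV U G) + condEnt μ Y (tupRV U G') := by
  have hY := entRV_tupRV_union_add_inter_le U hμ Y G G'
  have hU := jentU_union_add_jentU_inter U hμ hμ1 hfact hG hG'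
  simp only [condEnt]
  simp only [jentU] at hU
  linarith

end Modularity

/-- (Polymatroid structure of the receiver region.) If the auxiliary random
variables `(U_S : S ∈ W)` are superposition-admitting, i.e. their joint law
factors as `p(U_W) = Π_S p(U_S | U_{↑{S}\{S}})`, then
`ρ(B) = I(U_B ; Y | U_{W∖B})` is normalized, non-decreasing and submodular on
the down-set lattice of `W`. -/
theorem receiver_region_polymatroid
    {β : Type*} [Fintype β] [DecidableEq β]
    (μ : Ω → ℝ) (hμ : ∀ ω, 0 ≤ μ ω) (hμ1 : ∑ ω : Ω, μ ω = 1)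
    (U : E → Ω → α) (Y : Ω → β)
    (hfact : ∀ u : E → α,
      pOf μ (fun ω (S : E) => U S ω) u =
        ∏ S : E, condP (pOf μ (fun ω (S : E) => U S ω)) (upF S \ {S}) S u)
    (ρ : Finset E → ℝ)
    (hρ : ∀ B : Finset E, (∀ x ∈ B, ∀ y, y ≤ x → y ∈ B) →
      ρ B = cmiRV μ (tupRV U B) Y (tupRV U (Finset.univ \ B))) :
    ρ ∅ = 0 ∧
    (∀ B B' : Finset E, (∀ x ∈ B, ∀ y, y ≤ x → y ∈ B) →
      (∀ x ∈ B', ∀ y, y ≤ x → y ∈ B') → B ⊆ B' → ρ B ≤ ρ B') ∧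
    (∀ B B' : Finset E, (∀ x ∈ B, ∀ y, y ≤ x → y ∈ B) →
      (∀ x ∈ B', ∀ y, y ≤ x → y ∈ B') →
      ρ (B ∩ B') + ρ (B ∪ B') ≤ ρ B + ρ B') := by
  have hlower : ∀ {B : Finset E}, (∀ x ∈ B, ∀ y, y ≤ x → y ∈ B) → IsLowerSet (B : Set E) :=
    fun hB x y hyx hx => hB x hx y hyx
  have hupper : ∀ {B : Finset E}, IsLowerSet (B : Set E) → IsUpperSet (↑(univ \ B) : Set E) :=
    fun hB => by rw [coe_sdiff, coe_univ, ← Set.compl_eq_univ_sdiff]; exact hB.compl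
  have hρ_eq : ∀ B : Finset E, IsLowerSet (B : Set E) →
      ρ B = condEnt μ Y (tupRV U (univ \ B)) - condEnt μ Y (tupRV U univ) := fun B hB => by
    rw [hρ B fun x hx y hyx => hB hyx hx, cmiRV_tupRV_eq, union_sdiff_of_subset (subset_univ B)]
  refine ⟨by rw [hρ_eq ∅ (coe_empty ▸ isLowerSet_empty), sdiff_empty, sub_self],
    fun B B' hB hB' hBB' => ?_, fun B B' hB hB' => ?_⟩
  · rw [hρ_eq B (hlower hB), hρ_eq B' (hlower hB')]
    linarith [condEnt_tupRV_anti U hμ Y (sdiff_subset_sdiff (subset_refl univ) hBB')]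
  · have hinter := coe_inter B B' ▸ (hlower hB).inter (hlower hB')
    have hunion := coe_union B B' ▸ (hlower hB).union (hlower hB')
    rw [hρ_eq _ hinter, hρ_eq _ hunion, hρ_eq B (hlower hB), hρ_eq B' (hlower hB'),
      sdiff_inter_distrib_right, sdiff_union_distrib]
    linarith [condEnt_tupRV_union_add_inter_le U hμ hμ1 hfact Y (hupper (hlower hB))
      (hupper (hlower hB'))]
end
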